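/- arXiv:2211.10912 — 3 statements merged into one kernel-verified Lean document; each statement's English description precedes it below -/
import Mathlib

section
/- The intersection of two integrally convex sets need not be integrally convex: S₁ = {(0,0,0), (0,1,1), (1,1,0), (1,2,1)} and S₂ = {(0,0,0), (0,1,0), (1,1,1), (1,2,1)} are both integrally convex subsets of ℤ³, but S₁ ∩ S₂ = {(0,0,0), (1,2,1)} is not integrally convex. -/
noncomputable section

def coeZR {n : ℕ} (z : Fin n → ℤ) : Fin n → ℝ := fun i => (z i : ℝ)

def IntNbhd {n : ℕ} (x : Fin n → ℝ) : Set (Fin n → ℤ) :=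
  {z | ∀ i, |x i - (z i : ℝ)| < 1}

def IntegrallyConvexSet {n : ℕ} (S : Set (Fin n → ℤ)) : Prop :=
  ∀ x ∈ convexHull ℝ (coeZR '' S), x ∈ convexHull ℝ (coeZR '' (S ∩ IntNbhd x))
def S81 : Set (Fin 3 → ℤ) := {![0,0,0], ![0,1,1], ![1,1,0], ![1,2,1]}

def S82 : Set (Fin 3 → ℤ) := {![0,0,0], ![0,1,0], ![1,1,1], ![1,2,1]}

/-!
In a convex combination `x = ∑ λ_z z` of lattice points whose coordinates pairwise differ by at
most `1`, each `z` with `λ_z > 0` satisfies `|x_i - z_i| ≤ 1 - λ_z < 1`, so such a set is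
integrally convex. `S81` and `S82` are lattice parallelograms `{0, u, v, u + v}`, and the convex
hull of a parallelogram is covered by the triangles `{0, u, v}` and `{u + v, u, v}`, which are
sets of this kind when `u`, `v`, `u - v ∈ {-1, 0, 1}ⁿ`. In `S81 ∩ S82 = {0, (1,2,1)}` the middle
coordinates differ by `2`, so the midpoint `(1/2, 1, 1/2)` has no point of the set in its
integral neighbourhood.
-/

theorem coeZR_zero {n : ℕ} : coeZR (0 : Fin n → ℤ) = 0 := by
  funext i; simp [coeZR]

theorem coeZR_add {n : ℕ} (a b : Fin n → ℤ) : coeZR (a + b) = coeZR a + coeZR b := by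
  funext i; simp [coeZR]

theorem smul_add_smul_add_smul_mem_convexHull {𝕜 E : Type*} [Field 𝕜] [LinearOrder 𝕜]
    [IsStrictOrderedRing 𝕜] [AddCommGroup E] [Module 𝕜 E] {x y z : E} {a b c : 𝕜}
    (ha : 0 ≤ a) (hb : 0 ≤ b) (hc : 0 ≤ c) (habc : a + b + c = 1) :
    a • x + b • y + c • z ∈ convexHull 𝕜 {x, y, z} :=
  mem_convexHull_of_exists_fintype ![a, b, c] ![x, y, z]
    (by simp [Fin.forall_fin_succ, ha, hb, hc]) (by simp [Fin.sum_univ_three, habc])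
    (by simp [Fin.forall_fin_succ]) (by simp [Fin.sum_univ_three])

open scoped Pointwise in
theorem convexHull_parallelogram_subset {𝕜 E : Type*} [Field 𝕜] [LinearOrder 𝕜]
    [IsStrictOrderedRing 𝕜] [AddCommGroup E] [Module 𝕜 E] (u v : E) :
    convexHull 𝕜 {0, u, v, u + v} ⊆ convexHull 𝕜 {0, u, v} ∪ convexHull 𝕜 {u + v, u, v} := by
  have hsum : ({0, u, v, u + v} : Set E) = ({0, u} : Set E) + {0, v} := by
    ext
    simp only [Set.mem_insert_iff, Set.mem_singleton_iff, Set.mem_add, exists_eq_or_imp,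
      add_zero, zero_add, existsAndEq, true_and]
    tauto
  rw [hsum, convexHull_add, convexHull_pair, convexHull_pair, segment_eq_image, segment_eq_image]
  rintro _ ⟨_, ⟨s, ⟨hs₀, hs₁⟩, rfl⟩, _, ⟨t, ⟨ht₀, ht₁⟩, rfl⟩, rfl⟩
  simp only [smul_zero, zero_add]
  rcases le_total (s + t) 1 with h | h
  · left
    convert smul_add_smul_add_smul_mem_convexHull (x := (0 : E)) (sub_nonneg.2 h) hs₀ ht₀
      (by ring) using 1
    rw [smul_zero, zero_add]
  · right
    convert smul_add_smul_add_smul_mem_convexHull (x := u + v) (y := u) (z := v)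
      (a := s + t - 1) (b := 1 - t) (c := 1 - s) (by linarith) (by linarith) (by linarith)
      (by ring) using 1
    module

theorem IntegrallyConvexSet.of_abs_sub_le_one {n : ℕ} {T : Set (Fin n → ℤ)}
    (hT : ∀ z ∈ T, ∀ w ∈ T, ∀ i, |z i - w i| ≤ 1) : IntegrallyConvexSet T := by
  classical
  intro x hx
  obtain ⟨ι, _, w, y, hw₀, hw₁, hy, hxy⟩ := mem_convexHull_iff_exists_fintype.1 hx
  choose z hzT hzy using hy
  obtain rfl : y = fun i => coeZR (z i) := funext fun i => (hzy i).symm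
  have hnear : ∀ j, w j ≠ 0 → z j ∈ IntNbhd x := by
    intro j hj k
    subst hxy
    simp only [Finset.sum_apply, Pi.smul_apply, smul_eq_mul, coeZR]
    calc |∑ i, w i * (z i k : ℝ) - z j k| = |∑ i, w i * ((z i k : ℝ) - z j k)| := by
          simp [mul_sub, Finset.sum_sub_distrib, ← Finset.sum_mul, hw₁]
      _ ≤ ∑ i, w i * |(z i k : ℝ) - z j k| :=
          (Finset.abs_sum_le_sum_abs _ _).trans_eq (by simp [abs_mul, abs_of_nonneg (hw₀ _)])
      _ = ∑ i ∈ Finset.univ.erase j, w i * |(z i k : ℝ) - z j k| := by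
          rw [Finset.sum_erase _ (by simp)]
      _ ≤ ∑ i ∈ Finset.univ.erase j, w i := by
          gcongr with i
          exact mul_le_of_le_one_right (hw₀ i) (by exact_mod_cast hT _ (hzT i) _ (hzT j) k)
      _ = 1 - w j := by rw [Finset.sum_erase_eq_sub (Finset.mem_univ j), hw₁]
      _ < 1 := by linarith [lt_of_le_of_ne (hw₀ j) (Ne.symm hj)]
  have hmem := (Finset.univ.filter (w · ≠ 0)).centerMass_mem_convexHull (fun i _ => hw₀ i)
    (by rw [Finset.sum_filter_ne_zero, hw₁]; exact one_pos)
    (fun i hi => ⟨z i, ⟨hzT i, hnear i (Finset.mem_filter.1 hi).2⟩, rfl⟩)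
    (s := coeZR '' (T ∩ IntNbhd x))
  rwa [Finset.centerMass_filter_ne_zero, Finset.centerMass_eq_of_sum_1 _ _ hw₁, hxy] at hmem

theorem IntegrallyConvexSet.mem_convexHull_inter_intNbhd {n : ℕ} {S T : Set (Fin n → ℤ)}
    (hT : IntegrallyConvexSet T) (hTS : T ⊆ S) {x : Fin n → ℝ}
    (hx : x ∈ convexHull ℝ (coeZR '' T)) : x ∈ convexHull ℝ (coeZR '' (S ∩ IntNbhd x)) :=
  convexHull_mono (Set.image_mono (Set.inter_subset_inter_left _ hTS)) (hT x hx)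

theorem not_integrallyConvexSet_pair {n : ℕ} {a b : Fin n → ℤ} {i : Fin n}
    (h : 2 ≤ |a i - b i|) : ¬ IntegrallyConvexSet {a, b} := by
  intro hab
  set m := midpoint ℝ (coeZR a) (coeZR b)
  have hm : m ∈ convexHull ℝ (coeZR '' {a, b}) := by
    rw [Set.image_pair, convexHull_pair]; exact midpoint_mem_segment _ _
  have hmi : m i = ((a i : ℝ) + b i) / 2 := by
    simp only [m, midpoint_eq_smul_add, invOf_eq_inv, Pi.smul_apply, Pi.add_apply, coeZR,
      smul_eq_mul]
    ring
  have hfar : {a, b} ∩ IntNbhd m = ∅ := by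
    have h' : (2 : ℝ) ≤ |(a i : ℝ) - b i| := by exact_mod_cast h
    ext z
    simp only [Set.mem_inter_iff, Set.mem_insert_iff, Set.mem_singleton_iff,
      Set.mem_empty_iff_false, iff_false, not_and]
    rintro (rfl | rfl) hz <;>
      have := abs_lt.1 (hz i) <;> rw [hmi] at this <;> rcases le_abs'.1 h' with h'' | h'' <;>
      linarith
  simpa [hfar] using hab m hm

theorem integrallyConvexSet_parallelogram {n : ℕ} {u v : Fin n → ℤ} (hu : ∀ i, |u i| ≤ 1)
    (hv : ∀ i, |v i| ≤ 1) (huv : ∀ i, |u i - v i| ≤ 1) :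
    IntegrallyConvexSet {0, u, v, u + v} := by
  intro x hx
  simp only [Set.image_insert_eq, Set.image_singleton, coeZR_zero, coeZR_add] at hx
  rcases convexHull_parallelogram_subset _ _ hx with h | h
  · refine IntegrallyConvexSet.mem_convexHull_inter_intNbhd (T := {0, u, v}) ?_
      (by intro; simp only [Set.mem_insert_iff, Set.mem_singleton_iff]; tauto)
      (by simpa [Set.image_insert_eq, coeZR_zero] using h)
    refine IntegrallyConvexSet.of_abs_sub_le_one ?_
    simp only [Set.mem_insert_iff, Set.mem_singleton_iff]
    rintro _ (rfl | rfl | rfl) _ (rfl | rfl | rfl) i <;>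
      simp [hu, hv, huv, (abs_sub_comm _ _).trans_le (huv i)]
  · refine IntegrallyConvexSet.mem_convexHull_inter_intNbhd (T := {u + v, u, v}) ?_
      (by intro; simp only [Set.mem_insert_iff, Set.mem_singleton_iff]; tauto)
      (by simpa [Set.image_insert_eq, coeZR_add] using h)
    refine IntegrallyConvexSet.of_abs_sub_le_one ?_
    simp only [Set.mem_insert_iff, Set.mem_singleton_iff]
    rintro _ (rfl | rfl | rfl) _ (rfl | rfl | rfl) i <;>
      simp [hu, hv, huv, (abs_sub_comm _ _).trans_le (huv i)]

theorem S81_eq_parallelogram : S81 = {0, ![0,1,1], ![1,1,0], ![0,1,1] + ![1,1,0]} := by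
  rw [S81, show (![0,0,0] : Fin 3 → ℤ) = 0 by decide,
    show (![1,2,1] : Fin 3 → ℤ) = ![0,1,1] + ![1,1,0] by decide]

theorem S82_eq_parallelogram : S82 = {0, ![0,1,0], ![1,1,1], ![0,1,0] + ![1,1,1]} := by
  rw [S82, show (![0,0,0] : Fin 3 → ℤ) = 0 by decide,
    show (![1,2,1] : Fin 3 → ℤ) = ![0,1,0] + ![1,1,1] by decide]

theorem S81_inter_S82 : S81 ∩ S82 = ({![0,0,0], ![1,2,1]} : Set (Fin 3 → ℤ)) := by
  ext z
  simp only [S81, S82, Set.mem_inter_iff, Set.mem_insert_iff, Set.mem_singleton_iff]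
  constructor
  · rintro ⟨h | h | h | h, h'⟩ <;> subst h <;> revert h' <;> decide
  · rintro (rfl | rfl) <;> simp

theorem stmt8 :
    IntegrallyConvexSet S81 ∧ IntegrallyConvexSet S82 ∧
    S81 ∩ S82 = ({![0,0,0], ![1,2,1]} : Set (Fin 3 → ℤ)) ∧
    ¬ IntegrallyConvexSet (S81 ∩ S82) := by
  refine ⟨?_, ?_, S81_inter_S82, ?_⟩
  · rw [S81_eq_parallelogram]
    exact integrallyConvexSet_parallelogram (by decide) (by decide) (by decide)
  · rw [S82_eq_parallelogram]
    exact integrallyConvexSet_parallelogram (by decide) (by decide) (by decide)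
  · rw [S81_inter_S82]
    exact not_integrallyConvexSet_pair (i := 1) (by decide)
end
end

section
/- If Q = (q_{ij}) is a symmetric n×n real matrix that is diagonally dominant with nonnegative diagonals, i.e., q_{ii} ≥ Σ_{j≠i} |q_{ij}| for all i, then the quadratic function f(x) = xᵀQx on ℤⁿ is integrally convex. -/
/-!
Replacing two integer points `z`, `w` of a convex combination by the two roundings of their
midpoint (toward `z` and toward `w`) keeps the barycenter. For `f x = xᵀ Q x` it changes
`f z + f w` by `-2 dᵀ Q e`, where the displacements `d`, `e` from `z` have coordinatewise equal
signs and similarly ordered sizes `⌊|wᵢ - zᵢ| / 2⌋`, `⌈|wᵢ - zᵢ| / 2⌉`, and diagonal dominance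
makes `dᵀ Q e ≥ 0`. The same move strictly lowers the average squared norm when
`‖w - z‖∞ ≥ 2`, so among the combinations with barycenter `p` and no larger value, one
minimising that average (it exists by compactness) has support of `ℓ∞`-diameter at most `1`,
hence inside `N(p)`. Localising `a λ + b μ` for local combinations `λ`, `μ` at `x`, `y` then
gives `f̃ (a x + b y) ≤ a f̃ x + b f̃ y`.
-/

noncomputable section

def localConvexExt {n : ℕ} (f : (Fin n → ℤ) → EReal) (x : Fin n → ℝ) : EReal :=
  sInf { v : EReal | ∃ l : (Fin n → ℤ) →₀ ℝ,
    (∀ z, 0 ≤ l z) ∧ (∀ z ∈ l.support, z ∈ IntNbhd x) ∧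
    (l.sum fun _ a => a) = 1 ∧
    (l.sum fun z a => a • coeZR z) = x ∧
    v = l.sum fun z a => (a : EReal) * f z }

def ERealConvexOn {n : ℕ} (g : (Fin n → ℝ) → EReal) : Prop :=
  ∀ x y : Fin n → ℝ, ∀ a b : ℝ, 0 ≤ a → 0 ≤ b → a + b = 1 →
    g (a • x + b • y) ≤ (a : EReal) * g x + (b : EReal) * g y

def IntegrallyConvexFn {n : ℕ} (f : (Fin n → ℤ) → EReal) : Prop :=
  ERealConvexOn (localConvexExt f)

open Finset Matrix

/-- `(a + b) / 2` rounded toward `a`. -/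
def roundMid (a b : ℤ) : ℤ := if a ≤ b then (a + b) / 2 else (a + b + 1) / 2

lemma roundMid_add_roundMid (a b : ℤ) : roundMid a b + roundMid b a = a + b := by
  unfold roundMid; split_ifs <;> omega

lemma abs_roundMid_sub (a b : ℤ) : |roundMid a b - a| = |b - a| / 2 := by
  unfold roundMid; simp only [abs_eq_max_neg]; split_ifs <;> omega

lemma abs_roundMid_swap_sub (a b : ℤ) : |roundMid b a - a| = (|b - a| + 1) / 2 := by
  unfold roundMid; simp only [abs_eq_max_neg]; split_ifs <;> omega

lemma roundMid_sub_mul_nonneg (a b : ℤ) : 0 ≤ (roundMid a b - a) * (roundMid b a - a) := by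
  have : (0 ≤ roundMid a b - a ∧ 0 ≤ roundMid b a - a) ∨
      (roundMid a b - a ≤ 0 ∧ roundMid b a - a ≤ 0) := by
    unfold roundMid; split_ifs <;> omega
  rcases this with ⟨h, h'⟩ | ⟨h, h'⟩
  · exact mul_nonneg h h'
  · exact mul_nonneg_of_nonpos_of_nonpos h h'

lemma one_le_roundMid_sub_mul {a b : ℤ} (hab : 2 ≤ |b - a|) :
    1 ≤ (roundMid a b - a) * (roundMid b a - a) := by
  rw [abs_eq_max_neg] at hab
  have : (1 ≤ roundMid a b - a ∧ 1 ≤ roundMid b a - a) ∨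
      (roundMid a b - a ≤ -1 ∧ roundMid b a - a ≤ -1) := by
    unfold roundMid; split_ifs <;> omega
  rcases this with ⟨h, h'⟩ | ⟨h, h'⟩ <;> nlinarith

def roundMidpoint {ι : Type*} (z w : ι → ℤ) : ι → ℤ := fun i => roundMid (z i) (w i)

lemma roundMidpoint_add_roundMidpoint {ι : Type*} (z w : ι → ℤ) :
    roundMidpoint z w + roundMidpoint w z = z + w :=
  funext fun i => roundMid_add_roundMid (z i) (w i)

lemma roundMidpoint_mem_Icc {ι : Type*} {z w a b : ι → ℤ} (hz : z ∈ Set.Icc a b)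
    (hw : w ∈ Set.Icc a b) : roundMidpoint z w ∈ Set.Icc a b := by
  have (i : ι) : a i ≤ z i ∧ z i ≤ b i ∧ a i ≤ w i ∧ w i ≤ b i := ⟨hz.1 i, hz.2 i, hw.1 i, hw.2 i⟩
  constructor <;> intro i <;> have := this i <;> simp only [roundMidpoint, roundMid] <;>
    split_ifs <;> omega

lemma monovary_abs_roundMidpoint_sub {ι : Type*} (z w : ι → ℤ) :
    Monovary (fun i => |((roundMidpoint z w i - z i : ℤ) : ℝ)|)
      (fun i => |((roundMidpoint w z i - z i : ℤ) : ℝ)|) := by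
  intro i j hij
  simp only [← Int.cast_abs, Int.cast_le, Int.cast_lt, roundMidpoint, abs_roundMid_sub,
    abs_roundMid_swap_sub] at hij ⊢
  omega

def RoundedMidpointConvex {ι : Type*} (f : (ι → ℤ) → ℝ) : Prop :=
  ∀ z w, f (roundMidpoint z w) + f (roundMidpoint w z) ≤ f z + f w

lemma dotProduct_mulVec_add_of_add_eq {R ι : Type*} [CommRing R] [Fintype ι]
    {Q : Matrix ι ι R} (hQ : Q.IsSymm) {x y z w : ι → R} (h : x + y = z + w) :
    x ⬝ᵥ Q *ᵥ x + y ⬝ᵥ Q *ᵥ y =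
      z ⬝ᵥ Q *ᵥ z + w ⬝ᵥ Q *ᵥ w - 2 * ((x - z) ⬝ᵥ Q *ᵥ (y - z)) := by
  have hcomm (u v : ι → R) : u ⬝ᵥ Q *ᵥ v = v ⬝ᵥ Q *ᵥ u := by
    rw [dotProduct_mulVec, dotProduct_comm, ← mulVec_transpose, hQ.eq]
  obtain rfl : w = x + y - z := by rw [h]; abel
  simp only [mulVec_add, mulVec_sub, dotProduct_add, add_dotProduct, dotProduct_sub,
    sub_dotProduct]
  rw [hcomm y x, hcomm z x, hcomm z y]
  ring

lemma sum_sum_erase_comm {ι M : Type*} [Fintype ι] [DecidableEq ι] [AddCommMonoid M]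
    (g : ι → ι → M) : ∑ i, ∑ j ∈ univ.erase i, g i j = ∑ i, ∑ j ∈ univ.erase i, g j i :=
  Finset.sum_comm' fun i j => by simp [ne_comm]

lemma dotProduct_mulVec_nonneg_of_diagDominant {R ι : Type*} [CommRing R] [LinearOrder R]
    [IsStrictOrderedRing R] [Fintype ι] [DecidableEq ι] {Q : Matrix ι ι R} (hQ : Q.IsSymm)
    (hdd : ∀ i, ∑ j ∈ univ.erase i, |Q i j| ≤ Q i i) {α β : ι → R}
    (hαβ : ∀ i, 0 ≤ α i * β i) (hmono : Monovary (fun i => |α i|) (fun i => |β i|)) :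
    0 ≤ α ⬝ᵥ Q *ᵥ β := by
  have hsplit : α ⬝ᵥ Q *ᵥ β =
      ∑ i, Q i i * (α i * β i) + ∑ i, ∑ j ∈ univ.erase i, Q i j * (α i * β j) := by
    simp only [dotProduct, mulVec, mul_sum, ← sum_add_distrib]
    refine sum_congr rfl fun i _ => ?_
    rw [← add_sum_erase _ _ (mem_univ i)]
    ring_nf
  have hpair (i j : ι) :
      -(|Q i j| * (|α i| * |β i|)) - |Q i j| * (|α j| * |β j|) ≤
        Q i j * (α i * β j) + Q i j * (α j * β i) :=
    calc -(|Q i j| * (|α i| * |β i|)) - |Q i j| * (|α j| * |β j|)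
        ≤ -(|Q i j| * (|α i| * |β j| + |α j| * |β i|)) := by
          rw [neg_sub_left, ← mul_add, neg_le_neg_iff]
          exact mul_le_mul_of_nonneg_left
            ((monovary_iff_mul_rearrangement.mp hmono i j).trans_eq (add_comm _ _))
            (abs_nonneg _)
      _ ≤ -(|Q i j| * |α i * β j + α j * β i|) := by
          gcongr
          exact (abs_add_le _ _).trans_eq (by rw [abs_mul, abs_mul])
      _ ≤ Q i j * (α i * β j) + Q i j * (α j * β i) := by
          rw [← abs_mul, ← mul_add]; exact neg_abs_le _
  have hswapO : ∑ i, ∑ j ∈ univ.erase i, Q i j * (α i * β j) =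
      ∑ i, ∑ j ∈ univ.erase i, Q i j * (α j * β i) := by
    rw [sum_sum_erase_comm]; simp only [hQ.apply]
  have hswapD : ∑ i, ∑ j ∈ univ.erase i, |Q i j| * (|α i| * |β i|) =
      ∑ i, ∑ j ∈ univ.erase i, |Q i j| * (|α j| * |β j|) := by
    rw [sum_sum_erase_comm]; simp only [hQ.apply]
  have hoff := sum_le_sum fun i (_ : i ∈ univ) => sum_le_sum fun j (_ : j ∈ univ.erase i) =>
    hpair i j
  simp only [sum_add_distrib, sum_sub_distrib, sum_neg_distrib] at hoff
  have hdom : ∑ i, ∑ j ∈ univ.erase i, |Q i j| * (|α i| * |β i|) ≤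
      ∑ i, Q i i * (α i * β i) := by
    refine sum_le_sum fun i _ => ?_
    rw [← sum_mul, ← abs_mul, abs_of_nonneg (hαβ i)]
    exact mul_le_mul_of_nonneg_right (hdd i) (hαβ i)
  linarith

theorem roundedMidpointConvex_quadratic {ι : Type*} [Fintype ι] [DecidableEq ι]
    {Q : Matrix ι ι ℝ} (hQ : Q.IsSymm) (hdd : ∀ i, ∑ j ∈ univ.erase i, |Q i j| ≤ Q i i) :
    RoundedMidpointConvex fun z : ι → ℤ => (Int.cast ∘ z) ⬝ᵥ Q *ᵥ (Int.cast ∘ z) := by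
  intro z w
  have hcast (u v : ι → ℤ) : (Int.cast ∘ (u + v) : ι → ℝ) = Int.cast ∘ u + Int.cast ∘ v := by
    ext; simp
  have hsub (u v : ι → ℤ) : (Int.cast ∘ u - Int.cast ∘ v : ι → ℝ) = Int.cast ∘ (u - v) := by
    ext; simp
  have hde : 0 ≤ (Int.cast ∘ (roundMidpoint z w - z)) ⬝ᵥ
      Q *ᵥ (Int.cast ∘ (roundMidpoint w z - z) : ι → ℝ) := by
    refine dotProduct_mulVec_nonneg_of_diagDominant hQ hdd (fun i => ?_)
      (monovary_abs_roundMidpoint_sub z w)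
    have := roundMid_sub_mul_nonneg (z i) (w i)
    simp only [Function.comp_apply]
    exact_mod_cast this
  have := dotProduct_mulVec_add_of_add_eq hQ (x := Int.cast ∘ roundMidpoint z w)
    (y := Int.cast ∘ roundMidpoint w z) (z := Int.cast ∘ z) (w := Int.cast ∘ w)
    (by rw [← hcast, ← hcast, roundMidpoint_add_roundMidpoint])
  rw [hsub, hsub] at this
  linarith

lemma dotProduct_self_roundMidpoint_lt {ι : Type*} [Fintype ι] {z w : ι → ℤ} {i : ι}
    (hi : 2 ≤ |w i - z i|) :
    roundMidpoint z w ⬝ᵥ roundMidpoint z w + roundMidpoint w z ⬝ᵥ roundMidpoint w z <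
      z ⬝ᵥ z + w ⬝ᵥ w := by
  classical
  have hde : 1 ≤ (roundMidpoint z w - z) ⬝ᵥ (roundMidpoint w z - z) :=
    (one_le_roundMid_sub_mul hi).trans <|
      single_le_sum (f := fun j => (roundMid (z j) (w j) - z j) * (roundMid (w j) (z j) - z j))
        (fun j _ => roundMid_sub_mul_nonneg (z j) (w j)) (mem_univ i)
  have := dotProduct_mulVec_add_of_add_eq (isSymm_one (α := ℤ) (n := ι))
    (roundMidpoint_add_roundMidpoint z w)
  simp only [one_mulVec] at this
  linarith

lemma abs_sum_mul_sub_lt_one {α : Type*} [DecidableEq α] {B : Finset α} {v g : α → ℝ}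
    (hv : ∀ x, 0 ≤ v x) (hv1 : ∑ x ∈ B, v x = 1) {z : α} (hz : z ∈ B) (hvz : v z ≠ 0)
    (hg : ∀ x ∈ B, v x ≠ 0 → |g x - g z| ≤ 1) : |∑ x ∈ B, v x * g x - g z| < 1 :=
  calc |∑ x ∈ B, v x * g x - g z| = |∑ x ∈ B, v x * (g x - g z)| := by
        simp only [mul_sub, sum_sub_distrib, ← sum_mul, hv1, one_mul]
    _ ≤ ∑ x ∈ B, v x * |g x - g z| :=
        (abs_sum_le_sum_abs _ _).trans_eq <| sum_congr rfl fun x _ => by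
          rw [abs_mul, abs_of_nonneg (hv x)]
    _ = ∑ x ∈ B.erase z, v x * |g x - g z| := (sum_erase _ (by simp)).symm
    _ ≤ ∑ x ∈ B.erase z, v x := sum_le_sum fun x hx => by
        by_cases hvx : v x = 0
        · simp [hvx]
        · exact mul_le_of_le_one_right (hv x) (hg x (mem_of_mem_erase hx) hvx)
    _ = 1 - v z := by rw [sum_erase_eq_sub hz, hv1]
    _ < 1 := by linarith [(hv z).lt_of_ne' hvz]

variable {n : ℕ}

-- Plain functions rather than `Finsupp`s, so that the weights on `B` form a compact set.
def IsConvexWeight (B : Finset (Fin n → ℤ)) (p : Fin n → ℝ) (v : (Fin n → ℤ) → ℝ) : Prop :=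
  (∀ x, 0 ≤ v x) ∧ (∀ x ∉ B, v x = 0) ∧ ∑ x ∈ B, v x = 1 ∧ ∑ x ∈ B, v x • coeZR x = p

lemma isClosed_setOf_isConvexWeight (B : Finset (Fin n → ℤ)) (p : Fin n → ℝ) :
    IsClosed {v | IsConvexWeight B p v} := by
  simp only [IsConvexWeight, Set.ofPred_and, Set.ofPred_forall]
  refine .inter (isClosed_iInter fun x => isClosed_le (by fun_prop) (by fun_prop)) <|
    .inter (isClosed_iInter fun x => isClosed_iInter fun _ => isClosed_eq (by fun_prop)
      (by fun_prop)) <| .inter (isClosed_eq (by fun_prop) (by fun_prop))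
      (isClosed_eq (by fun_prop) (by fun_prop))

lemma IsConvexWeight.mem_Icc {B : Finset (Fin n → ℤ)} {p : Fin n → ℝ} {v : (Fin n → ℤ) → ℝ}
    (hv : IsConvexWeight B p v) : v ∈ Set.Icc 0 1 := by
  refine ⟨hv.1, fun x => ?_⟩
  by_cases hx : x ∈ B
  · exact (single_le_sum (fun y _ => hv.1 y) hx).trans_eq hv.2.2.1
  · simp [hv.2.1 x hx]

def transferMass (v : (Fin n → ℤ) → ℝ) (z w : Fin n → ℤ) : (Fin n → ℤ) → ℝ :=
  v + min (v z) (v w) • (Pi.single (roundMidpoint z w) 1 + Pi.single (roundMidpoint w z) 1 -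
    Pi.single z 1 - Pi.single w 1)

section transferMass

variable {B : Finset (Fin n → ℤ)} {p : Fin n → ℝ} {v : (Fin n → ℤ) → ℝ} {z w : Fin n → ℤ}

lemma sum_transferMass_smul {M : Type*} [AddCommGroup M] [Module ℝ M]
    (hB : ∀ z ∈ B, ∀ w ∈ B, roundMidpoint z w ∈ B) (hz : z ∈ B) (hw : w ∈ B)
    (g : (Fin n → ℤ) → M) :
    ∑ x ∈ B, transferMass v z w x • g x = ∑ x ∈ B, v x • g x +
      min (v z) (v w) • (g (roundMidpoint z w) + g (roundMidpoint w z) - g z - g w) := by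
  simp only [transferMass, Pi.add_apply, Pi.smul_apply, Pi.sub_apply, add_smul, sub_smul,
    smul_eq_mul, mul_smul, sum_add_distrib, sum_sub_distrib, ← smul_sum, Pi.single_apply,
    ite_smul, one_smul, zero_smul, sum_ite_eq', hB z hz w hw, hB w hw z hz, hz, hw, if_true]

lemma IsConvexWeight.transferMass (hv : IsConvexWeight B p v)
    (hB : ∀ z ∈ B, ∀ w ∈ B, roundMidpoint z w ∈ B) (hz : z ∈ B) (hw : w ∈ B) (hzw : z ≠ w) :
    IsConvexWeight B p (transferMass v z w) := by
  obtain ⟨hv0, hvB, hv1, hvp⟩ := hv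
  refine ⟨fun x => ?_, fun x hx => ?_, ?_, ?_⟩
  · have ht : 0 ≤ min (v z) (v w) := le_min (hv0 z) (hv0 w)
    have hvz := min_le_left (v z) (v w)
    have hvw := min_le_right (v z) (v w)
    have := hv0 x
    simp only [_root_.transferMass, Pi.add_apply, Pi.smul_apply, Pi.sub_apply, smul_eq_mul,
      Pi.single_apply]
    split_ifs <;> subst_vars <;> first | exact absurd rfl hzw | nlinarith
  · have hne (y) (hy : y ∈ B) : x ≠ y := fun h => hx (h ▸ hy)
    simp [_root_.transferMass, hvB x hx, hne _ hz, hne _ hw, hne _ (hB z hz w hw),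
      hne _ (hB w hw z hz)]
  · simpa [hv1] using sum_transferMass_smul hB hz hw (v := v) fun _ => (1 : ℝ)
  · have hsum : coeZR (roundMidpoint z w) + coeZR (roundMidpoint w z) = coeZR z + coeZR w := by
      ext i
      simpa [coeZR] using congr_arg (fun u : Fin n → ℤ => (u i : ℝ))
        (roundMidpoint_add_roundMidpoint z w)
    rw [sum_transferMass_smul hB hz hw, hvp, hsum, sub_sub, sub_self, smul_zero, add_zero]

lemma IsConvexWeight.exists_lt_of_one_lt_abs {f : (Fin n → ℤ) → ℝ}
    (hf : RoundedMidpointConvex f) (hv : IsConvexWeight B p v)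
    (hB : ∀ z ∈ B, ∀ w ∈ B, roundMidpoint z w ∈ B) (hz : v z ≠ 0) (hw : v w ≠ 0) {i : Fin n}
    (hi : 1 < |w i - z i|) :
    ∃ v', IsConvexWeight B p v' ∧ ∑ x ∈ B, v' x * f x ≤ ∑ x ∈ B, v x * f x ∧
      ∑ x ∈ B, v' x * ((x ⬝ᵥ x : ℤ) : ℝ) < ∑ x ∈ B, v x * ((x ⬝ᵥ x : ℤ) : ℝ) := by
  have hmem (x) (hx : v x ≠ 0) : x ∈ B := by_contra fun h => hx (hv.2.1 x h)
  have hzw : z ≠ w := by rintro rfl; simp at hi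
  have ht : 0 < min (v z) (v w) := lt_min ((hv.1 z).lt_of_ne' hz) ((hv.1 w).lt_of_ne' hw)
  have hf' := sum_transferMass_smul (v := v) hB (hmem z hz) (hmem w hw) f
  have hψ := sum_transferMass_smul (v := v) hB (hmem z hz) (hmem w hw)
    fun x => ((x ⬝ᵥ x : ℤ) : ℝ)
  have hlt : ((roundMidpoint z w ⬝ᵥ roundMidpoint z w : ℤ) : ℝ) +
      ((roundMidpoint w z ⬝ᵥ roundMidpoint w z : ℤ) : ℝ) <
        ((z ⬝ᵥ z : ℤ) : ℝ) + ((w ⬝ᵥ w : ℤ) : ℝ) := by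
    exact_mod_cast dotProduct_self_roundMidpoint_lt (show 2 ≤ |w i - z i| by omega)
  simp only [smul_eq_mul] at hf' hψ
  refine ⟨_, hv.transferMass hB (hmem z hz) (hmem w hw) hzw, ?_, ?_⟩
  · nlinarith [hf z w]
  · nlinarith

end transferMass

theorem RoundedMidpointConvex.exists_local_weight {f : (Fin n → ℤ) → ℝ}
    (hf : RoundedMidpointConvex f) {B : Finset (Fin n → ℤ)}
    (hB : ∀ z ∈ B, ∀ w ∈ B, roundMidpoint z w ∈ B) {p : Fin n → ℝ} {v₀ : (Fin n → ℤ) → ℝ}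
    (hv₀ : IsConvexWeight B p v₀) :
    ∃ v, IsConvexWeight B p v ∧ (∀ x, v x ≠ 0 → x ∈ IntNbhd p) ∧
      ∑ x ∈ B, v x * f x ≤ ∑ x ∈ B, v₀ x * f x := by
  set A := {v | IsConvexWeight B p v ∧ ∑ x ∈ B, v x * f x ≤ ∑ x ∈ B, v₀ x * f x}
  have hA : IsCompact A := isCompact_Icc.of_isClosed_subset
    ((isClosed_setOf_isConvexWeight B p).inter <|
      isClosed_le (f := fun v : (Fin n → ℤ) → ℝ => ∑ x ∈ B, v x * f x) (by fun_prop)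
        continuous_const)
    fun v hv => hv.1.mem_Icc
  obtain ⟨v, ⟨hv, hvf⟩, hmin⟩ := hA.exists_isMinOn ⟨v₀, hv₀, le_rfl⟩
    (f := fun v => ∑ x ∈ B, v x * ((x ⬝ᵥ x : ℤ) : ℝ)) (Continuous.continuousOn (by fun_prop))
  have hclose (z w) (hz : v z ≠ 0) (hw : v w ≠ 0) (i) : |w i - z i| ≤ 1 := by
    by_contra! hi
    obtain ⟨v', hv', hv'f, hlt⟩ := hv.exists_lt_of_one_lt_abs hf hB hz hw hi
    exact (hmin ⟨hv', hv'f.trans hvf⟩).not_gt hlt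
  refine ⟨v, hv, fun x hx i => ?_, hvf⟩
  have hp : p i = ∑ y ∈ B, v y * (y i : ℝ) := by
    rw [← hv.2.2.2]; simp [coeZR, Finset.sum_apply]
  rw [hp]
  exact abs_sum_mul_sub_lt_one hv.1 hv.2.2.1 (by_contra fun h => hx (hv.2.1 x h)) hx
    fun y _ hy => by exact_mod_cast hclose x y hx hy i

def IsConvexComb (l : (Fin n → ℤ) →₀ ℝ) (p : Fin n → ℝ) : Prop :=
  (∀ z, 0 ≤ l z) ∧ Finsupp.linearCombination ℝ (fun _ => (1 : ℝ)) l = 1 ∧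
    Finsupp.linearCombination ℝ coeZR l = p

lemma IsConvexComb.isConvexWeight {l : (Fin n → ℤ) →₀ ℝ} {p : Fin n → ℝ}
    (hl : IsConvexComb l p) {B : Finset (Fin n → ℤ)} (hB : l.support ⊆ B) :
    IsConvexWeight B p l := by
  have hB' : l ∈ Finsupp.supported ℝ ℝ (B : Set (Fin n → ℤ)) := (Finsupp.mem_supported ℝ l).2 hB
  refine ⟨hl.1, fun x hx => Finsupp.notMem_support_iff.1 fun h => hx (hB h), ?_, ?_⟩
  · simpa [Finsupp.linearCombination_apply_of_mem_supported ℝ hB'] using hl.2.1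
  · rw [← Finsupp.linearCombination_apply_of_mem_supported ℝ hB', hl.2.2]

lemma IsConvexWeight.isConvexComb_onFinset {B : Finset (Fin n → ℤ)} {p : Fin n → ℝ}
    {v : (Fin n → ℤ) → ℝ} (hv : IsConvexWeight B p v) (hvB : ∀ x, v x ≠ 0 → x ∈ B) :
    IsConvexComb (Finsupp.onFinset B v hvB) p := by
  refine ⟨hv.1, ?_, ?_⟩
  · simpa [Finsupp.linearCombination_onFinset] using hv.2.2.1
  · rw [Finsupp.linearCombination_onFinset, hv.2.2.2]

lemma IsConvexComb.add {l m : (Fin n → ℤ) →₀ ℝ} {x y : Fin n → ℝ} (hl : IsConvexComb l x)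
    (hm : IsConvexComb m y) {a b : ℝ} (ha : 0 ≤ a) (hb : 0 ≤ b) (hab : a + b = 1) :
    IsConvexComb (a • l + b • m) (a • x + b • y) := by
  refine ⟨fun z => ?_, ?_, ?_⟩
  · simp only [Finsupp.add_apply, Finsupp.smul_apply, smul_eq_mul]
    exact add_nonneg (mul_nonneg ha (hl.1 z)) (mul_nonneg hb (hm.1 z))
  · simp [hl.2.1, hm.2.1, hab]
  · simp [hl.2.2, hm.2.2]

theorem RoundedMidpointConvex.exists_local_comb {f : (Fin n → ℤ) → ℝ}
    (hf : RoundedMidpointConvex f) {l : (Fin n → ℤ) →₀ ℝ} {p : Fin n → ℝ}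
    (hl : IsConvexComb l p) :
    ∃ l', IsConvexComb l' p ∧ (∀ z ∈ l'.support, z ∈ IntNbhd p) ∧
      Finsupp.linearCombination ℝ f l' ≤ Finsupp.linearCombination ℝ f l := by
  set c := ∑ z ∈ l.support, |z|
  have hsupp : l.support ⊆ Finset.Icc (-c) c := fun z hz => by
    have hzc : |z| ≤ c := single_le_sum (fun y _ => abs_nonneg y) hz
    exact Finset.mem_Icc.2 ⟨(neg_le_neg hzc).trans (neg_le.2 (neg_le_abs z)),
      (le_abs_self z).trans hzc⟩
  have hB : ∀ z ∈ Finset.Icc (-c) c, ∀ w ∈ Finset.Icc (-c) c,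
      roundMidpoint z w ∈ Finset.Icc (-c) c := fun z hz w hw =>
    Finset.mem_Icc.2 (roundMidpoint_mem_Icc (Finset.mem_Icc.1 hz) (Finset.mem_Icc.1 hw))
  obtain ⟨v, hv, hloc, hval⟩ := hf.exists_local_weight hB (hl.isConvexWeight hsupp)
  have hvB (x) (hx : v x ≠ 0) : x ∈ Finset.Icc (-c) c := by_contra fun h => hx (hv.2.1 x h)
  refine ⟨_, hv.isConvexComb_onFinset hvB, fun z hz => hloc z (by simpa using hz), ?_⟩
  rw [Finsupp.linearCombination_onFinset,
    Finsupp.linearCombination_apply_of_mem_supported ℝ ((Finsupp.mem_supported ℝ l).2 hsupp)]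
  exact hval

def localValues (f : (Fin n → ℤ) → ℝ) (p : Fin n → ℝ) : Set ℝ :=
  {r | ∃ l, IsConvexComb l p ∧ (∀ z ∈ l.support, z ∈ IntNbhd p) ∧
    Finsupp.linearCombination ℝ f l = r}

lemma bddBelow_localValues {f : (Fin n → ℤ) → ℝ} (hf : BddBelow (Set.range f))
    (p : Fin n → ℝ) : BddBelow (localValues f p) := by
  obtain ⟨C, hC⟩ := hf
  refine ⟨C, ?_⟩
  rintro _ ⟨l, hl, -, rfl⟩
  have h1 := hl.2.1
  simp only [Finsupp.linearCombination_apply, Finsupp.sum, smul_eq_mul, mul_one] at h1 ⊢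
  calc C = ∑ z ∈ l.support, l z * C := by rw [← sum_mul, h1, one_mul]
    _ ≤ ∑ z ∈ l.support, l z * f z :=
      sum_le_sum fun z _ => mul_le_mul_of_nonneg_left (hC ⟨z, rfl⟩) (hl.1 z)

lemma EReal.coe_finset_sum {α : Type*} (s : Finset α) (g : α → ℝ) :
    ((∑ x ∈ s, g x : ℝ) : EReal) = ∑ x ∈ s, (g x : EReal) :=
  map_sum (⟨⟨(↑), EReal.coe_zero⟩, EReal.coe_add⟩ : ℝ →+ EReal) g s

lemma localConvexExt_coe (f : (Fin n → ℤ) → ℝ) (p : Fin n → ℝ) :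
    localConvexExt (fun z => (f z : EReal)) p = sInf ((↑) '' localValues f p) := by
  have hsum (l : (Fin n → ℤ) →₀ ℝ) :
      (l.sum fun _ a => a) = Finsupp.linearCombination ℝ (fun _ => (1 : ℝ)) l := by
    simp [Finsupp.linearCombination_apply]
  have hval (l : (Fin n → ℤ) →₀ ℝ) :
      (l.sum fun z a => (a : EReal) * f z) = ↑(Finsupp.linearCombination ℝ f l) := by
    simp [Finsupp.linearCombination_apply, Finsupp.sum, EReal.coe_finset_sum]
  unfold localConvexExt localValues
  congr 1
  ext r
  constructor
  · rintro ⟨l, h0, hloc, h1, hp, rfl⟩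
    exact ⟨_, ⟨l, ⟨h0, hsum l ▸ h1, hp⟩, hloc, rfl⟩, (hval l).symm⟩
  · rintro ⟨_, ⟨l, ⟨h0, h1, hp⟩, hloc, rfl⟩, rfl⟩
    exact ⟨l, h0, hloc, (hsum l).trans h1, hp, (hval l).symm⟩

lemma EReal.sInf_image_coe {S : Set ℝ} (hne : S.Nonempty) (hS : BddBelow S) :
    sInf (((↑) : ℝ → EReal) '' S) = ↑(sInf S) := by
  refine le_antisymm ?_ (le_sInf ?_)
  · have hlow : ∀ u ∈ S, sInf (((↑) : ℝ → EReal) '' S) ≤ u := fun u hu => sInf_le ⟨u, hu, rfl⟩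
    generalize sInf (((↑) : ℝ → EReal) '' S) = X at hlow ⊢
    induction X using EReal.rec with
    | bot => exact bot_le
    | coe x => exact EReal.coe_le_coe_iff.2 (le_csInf hne fun u hu => by exact_mod_cast hlow u hu)
    | top => exact absurd (hlow _ hne.some_mem) (by simp)
  · rintro _ ⟨u, hu, rfl⟩
    exact EReal.coe_le_coe_iff.2 (csInf_le hS hu)

lemma EReal.le_mul_sInf_add_mul_sInf {a b : ℝ} (ha : 0 < a) (hb : 0 < b) {S T : Set ℝ}
    (hS : BddBelow S) (hT : BddBelow T) {c : EReal}
    (h : ∀ u ∈ S, ∀ v ∈ T, c ≤ ↑(a * u + b * v)) :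
    c ≤ a * sInf (((↑) : ℝ → EReal) '' S) + b * sInf (((↑) : ℝ → EReal) '' T) := by
  rcases S.eq_empty_or_nonempty with rfl | hSne
  · rcases T.eq_empty_or_nonempty with rfl | hTne
    · simp [EReal.coe_mul_top_of_pos ha, EReal.coe_mul_top_of_pos hb]
    · simp [EReal.coe_mul_top_of_pos ha, EReal.sInf_image_coe hTne hT, ← EReal.coe_mul]
  rcases T.eq_empty_or_nonempty with rfl | hTne
  · simp [EReal.coe_mul_top_of_pos hb, EReal.sInf_image_coe hSne hS, ← EReal.coe_mul]
  rw [EReal.sInf_image_coe hSne hS, EReal.sInf_image_coe hTne hT, ← EReal.coe_mul,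
    ← EReal.coe_mul, ← EReal.coe_add]
  induction c using EReal.rec with
  | bot => exact bot_le
  | coe c =>
    have hc : ∀ u ∈ S, ∀ v ∈ T, c ≤ a * u + b * v := fun u hu v hv => by
      exact_mod_cast h u hu v hv
    have hS' : ∀ v ∈ T, (c - b * v) / a ≤ sInf S := fun v hv =>
      le_csInf hSne fun u hu => by rw [div_le_iff₀ ha]; linarith [hc u hu v hv]
    have hT' : (c - a * sInf S) / b ≤ sInf T := le_csInf hTne fun v hv => by
      have := hS' v hv
      rw [div_le_iff₀ ha] at this
      rw [div_le_iff₀ hb]; linarith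
    rw [div_le_iff₀ hb] at hT'
    exact EReal.coe_le_coe_iff.2 (by linarith)
  | top =>
    exact absurd (top_le_iff.1 (h _ hSne.some_mem _ hTne.some_mem)) (EReal.coe_ne_top _)

theorem integrallyConvexFn_of_roundedMidpointConvex {f : (Fin n → ℤ) → ℝ}
    (hf : RoundedMidpointConvex f) (hbdd : BddBelow (Set.range f)) :
    IntegrallyConvexFn fun z => (f z : EReal) := by
  intro x y a b ha hb hab
  rcases ha.eq_or_lt with rfl | ha
  · obtain rfl : b = 1 := by linarith
    simp
  rcases hb.eq_or_lt with rfl | hb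
  · obtain rfl : a = 1 := by linarith
    simp
  simp only [localConvexExt_coe]
  refine EReal.le_mul_sInf_add_mul_sInf ha hb (bddBelow_localValues hbdd x)
    (bddBelow_localValues hbdd y) ?_
  rintro _ ⟨l, hl, -, rfl⟩ _ ⟨m, hm, -, rfl⟩
  obtain ⟨l', hl', hloc, hle⟩ := hf.exists_local_comb (hl.add hm ha.le hb.le hab)
  have hmem : Finsupp.linearCombination ℝ f l' ∈ localValues f (a • x + b • y) :=
    ⟨l', hl', hloc, rfl⟩
  refine (sInf_le (Set.mem_image_of_mem _ hmem)).trans (EReal.coe_le_coe_iff.2 ?_)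
  simpa using hle

theorem stmt12 {n : ℕ} (Q : Matrix (Fin n) (Fin n) ℝ) (hsym : Q.IsSymm)
    (hdd : ∀ i, ∑ j ∈ Finset.univ.erase i, |Q i j| ≤ Q i i) :
    IntegrallyConvexFn
      (fun z : Fin n → ℤ => ((∑ i, ∑ j, (z i : ℝ) * Q i j * (z j : ℝ) : ℝ) : EReal)) := by
  have hq (z : Fin n → ℤ) : ∑ i, ∑ j, (z i : ℝ) * Q i j * (z j : ℝ) =
      (Int.cast ∘ z) ⬝ᵥ Q *ᵥ (Int.cast ∘ z) := by
    simp [dotProduct, mulVec, mul_sum, mul_assoc]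
  simp only [hq]
  refine integrallyConvexFn_of_roundedMidpointConvex (roundedMidpointConvex_quadratic hsym hdd)
    ⟨0, ?_⟩
  rintro _ ⟨z, rfl⟩
  exact dotProduct_mulVec_nonneg_of_diagDominant hsym hdd (fun i => mul_self_nonneg _)
    (monovary_self _)
end
end

section
/- Let f: ℤⁿ → ℝ ∪ {+∞} be an integrally convex function and x* ∈ dom f. Then x* is a global minimizer of f if and only if f(x*) ≤ f(x* + d) for all d ∈ {−1, 0, +1}ⁿ. -/
noncomputable section

/-!
If `f y < f x`, take the point `p = (1 - b) x + b y` with `b > 0` so small that `p` is within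
distance `< 1` of `x` in every coordinate. Then every integer point of the integral neighbourhood
of `p` lies in `x + {-1, 0, 1}ⁿ`, so local optimality gives `f̃ p ≥ f x`, whereas convexity of `f̃`
and `f̃ ≤ f` on `ℤⁿ` give `f̃ p ≤ (1 - b) f x + b f y < f x`.
-/

theorem localConvexExt_coeZR_le {n : ℕ} (f : (Fin n → ℤ) → EReal) (z : Fin n → ℤ) :
    localConvexExt f (coeZR z) ≤ f z := by
  apply sInf_le
  refine ⟨Finsupp.single z 1, fun w => ?_, fun w hw => ?_, ?_, ?_, ?_⟩
  · by_cases h : z = w <;> simp [h]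
  · obtain rfl : w = z := by simpa using Finsupp.support_single_subset hw
    intro i
    simp [coeZR]
  · rw [Finsupp.sum_single_index rfl]
  · rw [Finsupp.sum_single_index (zero_smul ℝ (coeZR z)), one_smul]
  · rw [Finsupp.sum_single_index (by simp)]
    simp

theorem le_localConvexExt_of_forall_intNbhd {n : ℕ} (f : (Fin n → ℤ) → EReal)
    (p : Fin n → ℝ) (F : ℝ) (hF : ∀ z ∈ IntNbhd p, (F : EReal) ≤ f z) :
    (F : EReal) ≤ localConvexExt f p := by
  apply le_sInf
  rintro v ⟨l, hnonneg, hsupp, hsum : ∑ z ∈ l.support, l z = 1, -, rfl⟩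
  calc (F : EReal) = ((∑ z ∈ l.support, l z * F : ℝ) : EReal) := by
        rw [← Finset.sum_mul, hsum, one_mul]
    _ = ∑ z ∈ l.support, ((l z * F : ℝ) : EReal) :=
        map_sum (⟨⟨Real.toEReal, EReal.coe_zero⟩, EReal.coe_add⟩ : ℝ →+ EReal) _ _
    _ ≤ ∑ z ∈ l.support, (l z : EReal) * f z := by
        refine Finset.sum_le_sum fun z hz => ?_
        rw [EReal.coe_mul]
        exact mul_le_mul_of_nonneg_left (hF z (hsupp z hz)) (by exact_mod_cast hnonneg z)

theorem exists_intNbhd_segment_subset_unitCube {n : ℕ} (x y : Fin n → ℤ) :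
    ∃ b : ℝ, 0 < b ∧ b ≤ 1 ∧ ∀ z ∈ IntNbhd ((1 - b) • coeZR x + b • coeZR y),
      ∀ i, (z - x) i = -1 ∨ (z - x) i = 0 ∨ (z - x) i = 1 := by
  set S : ℝ := ∑ i, |(y i : ℝ) - x i|
  have hS : 0 ≤ S := Finset.sum_nonneg fun i _ => abs_nonneg _
  refine ⟨1 / (S + 1), by positivity, by rw [div_le_one (by linarith)]; linarith, ?_⟩
  intro z hz i
  have hstep : |(1 / (S + 1)) * ((y i : ℝ) - x i)| < 1 := by
    have hi : |(y i : ℝ) - x i| ≤ S :=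
      Finset.single_le_sum (f := fun j => |(y j : ℝ) - x j|) (fun j _ => abs_nonneg _)
        (Finset.mem_univ i)
    rw [abs_mul, abs_of_pos (by positivity), div_mul_eq_mul_div, one_mul,
      div_lt_one (by linarith)]
    linarith
  have hclose : |((z i - x i : ℤ) : ℝ)| < 2 := by
    have hzi := hz i
    simp only [Pi.add_apply, Pi.smul_apply, smul_eq_mul, coeZR] at hzi
    calc |((z i - x i : ℤ) : ℝ)|
        = |(1 / (S + 1)) * ((y i : ℝ) - x i) - ((1 - 1 / (S + 1)) * x i
            + 1 / (S + 1) * y i - z i)| := by push_cast; ring_nf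
      _ ≤ |(1 / (S + 1)) * ((y i : ℝ) - x i)| + |(1 - 1 / (S + 1)) * x i
            + 1 / (S + 1) * y i - z i| := abs_sub _ _
      _ < 2 := by linarith
  have hclose' : |z i - x i| < 2 := by exact_mod_cast hclose
  rw [abs_lt] at hclose'
  simp only [Pi.sub_apply]
  omega

theorem IntegrallyConvexFn.le_of_forall_unitCube {n : ℕ} {f : (Fin n → ℤ) → EReal}
    (hf : IntegrallyConvexFn f) {x y : Fin n → ℤ} {F G : ℝ} (hx : f x ≤ F) (hy : f y ≤ G)
    (hcube : ∀ d : Fin n → ℤ, (∀ i, d i = -1 ∨ d i = 0 ∨ d i = 1) → (F : EReal) ≤ f (x + d)) :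
    F ≤ G := by
  by_contra! hGF
  obtain ⟨b, hb0, hb1, hcube_nbhd⟩ := exists_intNbhd_segment_subset_unitCube x y
  set p := (1 - b) • coeZR x + b • coeZR y
  have hlower : (F : EReal) ≤ localConvexExt f p :=
    le_localConvexExt_of_forall_intNbhd f p F fun z hz => by
      simpa using hcube (z - x) (hcube_nbhd z hz)
  have hupper : localConvexExt f p ≤ (((1 - b) * F + b * G : ℝ) : EReal) := by
    calc localConvexExt f p
        ≤ ((1 - b : ℝ) : EReal) * localConvexExt f (coeZR x)
          + (b : EReal) * localConvexExt f (coeZR y) :=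
          hf _ _ _ _ (by linarith) hb0.le (by ring)
      _ ≤ ((1 - b : ℝ) : EReal) * F + (b : EReal) * G := by
          gcongr
          · exact (localConvexExt_coeZR_le f x).trans hx
          · exact (localConvexExt_coeZR_le f y).trans hy
      _ = (((1 - b) * F + b * G : ℝ) : EReal) := by norm_cast
  have : F ≤ (1 - b) * F + b * G := by exact_mod_cast hlower.trans hupper
  nlinarith

theorem stmt14_general {n : ℕ} (f : (Fin n → ℤ) → EReal)
    (hf : IntegrallyConvexFn f) (x : Fin n → ℤ) (hx : f x ≠ ⊤) :
    (∀ y : Fin n → ℤ, f x ≤ f y) ↔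
      ∀ d : Fin n → ℤ, (∀ i, d i = -1 ∨ d i = 0 ∨ d i = 1) → f x ≤ f (x + d) := by
  refine ⟨fun hmin d _ => hmin (x + d), fun hcube y => ?_⟩
  rcases eq_or_ne (f x) ⊥ with hbot | hbot
  · exact hbot ▸ bot_le
  have hF : ((f x).toReal : EReal) = f x := EReal.coe_toReal hx hbot
  by_contra! hlt
  obtain ⟨G, hyG, hGx⟩ := EReal.lt_iff_exists_real_btwn.1 hlt
  have := hf.le_of_forall_unitCube hF.ge hyG.le (hF ▸ hcube)
  exact absurd (EReal.coe_le_coe_iff.2 this) (not_le.2 (hF ▸ hGx))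

theorem stmt14 {n : ℕ} (f : (Fin n → ℤ) → EReal) (hbot : ∀ z, f z ≠ ⊥)
    (hf : IntegrallyConvexFn f) (x : Fin n → ℤ) (hx : f x ≠ ⊤) :
    (∀ y : Fin n → ℤ, f x ≤ f y) ↔
      ∀ d : Fin n → ℤ, (∀ i, d i = -1 ∨ d i = 0 ∨ d i = 1) → f x ≤ f (x + d) :=
  stmt14_general f hf x hx
end
end
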